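/- Let {t_b}_{b∈L} be an assignment with ∑_{b∈L} t_b = t_max (a feasible solution of problem (B)). Then {t_b}_{b∈L} is NOT a solution of (B) if and only if there exist two distinct indices κ, ρ ∈ L with t_ρ ≥ 1 such that (1-p)·β_p(t_κ, r_κ) > (1-p)·β_p(t_ρ − 1, r_ρ). -/

import Mathlib

/-!
`E(r, t)` is the prefix sum `∑_{s<t} (1-p) β_p(s, r)`: the `(t+1)`-st packet raises the rank
exactly when it arrives (probability `1-p`) while fewer than `r` of the first `t` did. Since
`β_p(s, r)` is non-increasing in `s`, problem (B) maximises a sum of concave functions under a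
budget. An allocation `t` admits no improving one-unit exchange iff some level `c` separates all
marginal gains `m_κ(t_κ)` from all marginal losses `m_ρ(t_ρ - 1)`, and then concavity bounds the
change of every block by `c` times its change of budget, which sums to zero.
-/

/-- `betaP p t r = ∑_{i=0}^{r-1} C(t,i) (1-p)^i p^(t-i)`. -/
noncomputable def betaP (p : ℝ) (t r : ℕ) : ℝ :=
  ∑ i ∈ Finset.range r, (t.choose i : ℝ) * (1 - p) ^ i * p ^ (t - i)

/-- Expected rank function `E(r,t) = ∑_{i=0}^{t} C(t,i) (1-p)^i p^(t-i) * min{i,r}`. -/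
noncomputable def expRank (p : ℝ) (r t : ℕ) : ℝ :=
  ∑ i ∈ Finset.range (t + 1),
    (t.choose i : ℝ) * (1 - p) ^ i * p ^ (t - i) * ((min i r : ℕ) : ℝ)

open Finset

section Binomial

variable {p : ℝ} {t i : ℕ}

noncomputable def binomWeight (p : ℝ) (t i : ℕ) : ℝ :=
  t.choose i * (1 - p) ^ i * p ^ (t - i)

/-- The expectation of `f X` for `X ~ Binomial(t, 1 - p)`. -/
noncomputable def binomExpect (p : ℝ) (t : ℕ) (f : ℕ → ℝ) : ℝ :=
  ∑ i ∈ range (t + 1), binomWeight p t i * f i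

lemma binomWeight_of_lt (h : t < i) : binomWeight p t i = 0 := by
  simp [binomWeight, Nat.choose_eq_zero_of_lt h]

lemma binomWeight_nonneg (hp0 : 0 ≤ p) (hp1 : p ≤ 1) : 0 ≤ binomWeight p t i := by
  have : 0 ≤ 1 - p := sub_nonneg.2 hp1
  unfold binomWeight
  positivity

lemma binomWeight_succ_zero : binomWeight p (t + 1) 0 = p * binomWeight p t 0 := by
  simp [binomWeight, pow_succ, mul_comm]

lemma binomWeight_succ_succ :
    binomWeight p (t + 1) (i + 1) = (1 - p) * binomWeight p t i + p * binomWeight p t (i + 1) := by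
  unfold binomWeight
  rw [Nat.choose_succ_succ, Nat.succ_sub_succ]
  rcases lt_or_ge i t with h | h
  · rw [show t - i = t - (i + 1) + 1 by omega]
    push_cast
    ring
  · rw [Nat.choose_eq_zero_of_lt (by omega : t < i + 1)]
    push_cast
    ring

lemma sum_range_binomWeight_mul (f : ℕ → ℝ) {N : ℕ} (hN : t + 1 ≤ N) :
    ∑ i ∈ range N, binomWeight p t i * f i = binomExpect p t f := by
  refine (sum_subset (range_subset_range.2 hN) fun i _ hi => ?_).symm
  rw [binomWeight_of_lt (by simpa using hi), zero_mul]

/-- Conditioning on the last of the `t + 1` trials. -/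
lemma binomExpect_succ (f : ℕ → ℝ) :
    binomExpect p (t + 1) f =
      p * binomExpect p t f + (1 - p) * binomExpect p t (fun i => f (i + 1)) := by
  rw [← sum_range_binomWeight_mul f (t := t) (N := t + 2) (by omega), binomExpect, binomExpect]
  simp only [sum_range_succ' _ (t + 1), binomWeight_succ_succ, binomWeight_succ_zero, add_mul,
    sum_add_distrib, mul_add, mul_sum, mul_assoc]
  ring

lemma binomExpect_add (f g : ℕ → ℝ) :
    binomExpect p t (fun i => f i + g i) = binomExpect p t f + binomExpect p t g := by
  simp only [binomExpect, mul_add, sum_add_distrib]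

lemma binomExpect_mono (hp0 : 0 ≤ p) (hp1 : p ≤ 1) {f g : ℕ → ℝ} (hfg : f ≤ g) :
    binomExpect p t f ≤ binomExpect p t g :=
  sum_le_sum fun i _ => mul_le_mul_of_nonneg_left (hfg i) (binomWeight_nonneg hp0 hp1)

lemma binomExpect_succ_le (hp0 : 0 ≤ p) (hp1 : p ≤ 1) {f : ℕ → ℝ} (hf : Antitone f) :
    binomExpect p (t + 1) f ≤ binomExpect p t f := by
  have hshift := mul_le_mul_of_nonneg_left
    (binomExpect_mono hp0 hp1 (t := t) fun i => hf i.le_succ) (sub_nonneg.2 hp1)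
  rw [binomExpect_succ]
  linarith

end Binomial

lemma betaP_eq_binomExpect (p : ℝ) (t r : ℕ) :
    betaP p t r = binomExpect p t (fun i => if i < r then 1 else 0) := by
  rw [← sum_range_binomWeight_mul _ (N := r + (t + 1)) (by omega), sum_range_add,
    sum_eq_zero (s := range (t + 1)) fun i _ => by simp]
  exact (sum_congr rfl fun i hi => by simp [mem_range.1 hi, binomWeight]).trans (add_zero _).symm

lemma betaP_antitone {p : ℝ} (hp0 : 0 ≤ p) (hp1 : p ≤ 1) (r : ℕ) :
    Antitone fun t => betaP p t r := by
  refine antitone_nat_of_succ_le fun t => ?_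
  simp only [betaP_eq_binomExpect]
  refine binomExpect_succ_le hp0 hp1 fun a b hab => ?_
  split_ifs <;> norm_num
  omega

lemma expRank_succ (p : ℝ) (r t : ℕ) :
    expRank p r (t + 1) = expRank p r t + (1 - p) * betaP p t r := by
  have hmin : ∀ i, ((min (i + 1) r : ℕ) : ℝ) = (min i r : ℕ) + if i < r then 1 else 0 := by
    intro i
    split_ifs with h
    · rw [show min (i + 1) r = min i r + 1 by omega, Nat.cast_succ]
    · rw [show min (i + 1) r = min i r by omega, add_zero]
  change binomExpect p (t + 1) _ = binomExpect p t _ + _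
  rw [binomExpect_succ, funext hmin, binomExpect_add, ← betaP_eq_binomExpect]
  ring

lemma expRank_eq_sum_betaP (p : ℝ) (r t : ℕ) :
    expRank p r t = ∑ s ∈ range t, (1 - p) * betaP p s r := by
  induction t with
  | zero => simp [expRank]
  | succ t ih => rw [expRank_succ, sum_range_succ, ih]

section Allocation

variable {ι : Type*}

/-- The supergradient inequality for the concave function `a ↦ ∑_{s<a} f s`. -/
lemma sum_range_sub_sum_range_le_of_antitone {f : ℕ → ℝ} (hf : Antitone f) {a : ℕ} {c : ℝ}
    (hca : f a ≤ c) (hac : 1 ≤ a → c ≤ f (a - 1)) (a' : ℕ) :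
    ∑ s ∈ range a', f s - ∑ s ∈ range a, f s ≤ c * ((a' : ℝ) - a) := by
  rcases le_total a a' with h | h
  · rw [← sum_Ico_eq_sub _ h]
    calc ∑ s ∈ Ico a a', f s ≤ #(Ico a a') • c :=
          sum_le_card_nsmul _ _ _ fun s hs => (hf (mem_Ico.1 hs).1).trans hca
      _ = c * ((a' : ℝ) - a) := by rw [Nat.card_Ico, nsmul_eq_mul, Nat.cast_sub h]; ring
  · rw [← neg_sub, ← sum_Ico_eq_sub _ h, neg_le]
    calc -(c * ((a' : ℝ) - a)) = #(Ico a' a) • c := by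
          rw [Nat.card_Ico, nsmul_eq_mul, Nat.cast_sub h]; ring
      _ ≤ ∑ s ∈ Ico a' a, f s := card_nsmul_le_sum _ _ _ fun s hs => by
          have hs := mem_Ico.1 hs
          exact (hac (by omega)).trans (hf (by omega))

lemma sum_add_add_eq_of_eqOn_compl_pair {M : Type*} [AddCommMonoid M] [DecidableEq ι]
    {L : Finset ι} {κ ρ : ι} (hκ : κ ∈ L) (hρ : ρ ∈ L) (hκρ : κ ≠ ρ) {f g : ι → M}
    (hfg : ∀ b ∈ L, b ≠ κ → b ≠ ρ → f b = g b) :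
    ∑ b ∈ L, f b + (g κ + g ρ) = ∑ b ∈ L, g b + (f κ + f ρ) := by
  have hsub : {κ, ρ} ⊆ L := insert_subset hκ (singleton_subset_iff.2 hρ)
  have hrest : ∑ b ∈ L \ {κ, ρ}, f b = ∑ b ∈ L \ {κ, ρ}, g b := sum_congr rfl fun b hb => by
    simp only [mem_sdiff, mem_insert, mem_singleton, not_or] at hb
    exact hfg b hb.1 hb.2.1 hb.2.2
  rw [← sum_sdiff hsub, ← sum_sdiff hsub (f := g), sum_pair hκρ, sum_pair hκρ, hrest]
  abel

variable (L : Finset ι) (m : ι → ℕ → ℝ)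

lemma sum_prefixSum_le_of_forall_exchange (hm : ∀ b ∈ L, Antitone (m b)) {t : ι → ℕ}
    (hex : ∀ κ ∈ L, ∀ ρ ∈ L, κ ≠ ρ → 1 ≤ t ρ → m κ (t κ) ≤ m ρ (t ρ - 1))
    {t' : ι → ℕ} (hsum : ∑ b ∈ L, t' b = ∑ b ∈ L, t b) :
    ∑ b ∈ L, ∑ s ∈ range (t' b), m b s ≤ ∑ b ∈ L, ∑ s ∈ range (t b), m b s := by
  rcases L.eq_empty_or_nonempty with rfl | hL
  · simp
  obtain ⟨κ, hκ, hmax⟩ := exists_max_image L (fun b => m b (t b)) hL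
  have hsep : ∀ ρ ∈ L, 1 ≤ t ρ → m κ (t κ) ≤ m ρ (t ρ - 1) := fun ρ hρ hρt => by
    rcases eq_or_ne κ ρ with rfl | hκρ
    · exact hm κ hκ (Nat.sub_le _ _)
    · exact hex κ hκ ρ hρ hκρ hρt
  have hblock : ∀ b ∈ L, ∑ s ∈ range (t' b), m b s - ∑ s ∈ range (t b), m b s ≤
      m κ (t κ) * ((t' b : ℝ) - t b) := fun b hb =>
    sum_range_sub_sum_range_le_of_antitone (hm b hb) (hmax b hb) (hsep b hb) (t' b)
  have hbudget : ∑ b ∈ L, ((t' b : ℝ) - t b) = 0 := by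
    rw [sum_sub_distrib, ← Nat.cast_sum, ← Nat.cast_sum, hsum, sub_self]
  have := sum_le_sum hblock
  rw [sum_sub_distrib, ← mul_sum, hbudget, mul_zero] at this
  linarith

lemma exists_sum_prefixSum_gt_of_exchange {t : ι → ℕ} {κ ρ : ι} (hκ : κ ∈ L) (hρ : ρ ∈ L)
    (hκρ : κ ≠ ρ) (hρt : 1 ≤ t ρ) (hlt : m ρ (t ρ - 1) < m κ (t κ)) :
    ∃ t' : ι → ℕ, ∑ b ∈ L, t' b = ∑ b ∈ L, t b ∧
      ∑ b ∈ L, ∑ s ∈ range (t b), m b s < ∑ b ∈ L, ∑ s ∈ range (t' b), m b s := by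
  classical
  set t' := Function.update (Function.update t κ (t κ + 1)) ρ (t ρ - 1)
  have ht'κ : t' κ = t κ + 1 := by simp [t', hκρ]
  have ht'ρ : t' ρ = t ρ - 1 := by simp [t']
  have hrest : ∀ b ∈ L, b ≠ κ → b ≠ ρ → t' b = t b := fun b _ hbκ hbρ => by simp [t', hbκ, hbρ]
  refine ⟨t', ?_, ?_⟩
  · have := sum_add_add_eq_of_eqOn_compl_pair hκ hρ hκρ hrest
    rw [ht'κ, ht'ρ] at this
    omega
  · have := sum_add_add_eq_of_eqOn_compl_pair hκ hρ hκρ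
      (f := fun b => ∑ s ∈ range (t' b), m b s) fun b hb hbκ hbρ => by rw [hrest b hb hbκ hbρ]
    obtain ⟨n, hn⟩ : ∃ n, t ρ = n + 1 := ⟨t ρ - 1, by omega⟩
    simp only [ht'κ, ht'ρ, hn, Nat.add_sub_cancel, sum_range_succ] at this hlt
    linarith

theorem exists_sum_prefixSum_gt_iff (hm : ∀ b ∈ L, Antitone (m b)) (t : ι → ℕ) :
    (∃ t' : ι → ℕ, ∑ b ∈ L, t' b = ∑ b ∈ L, t b ∧
      ∑ b ∈ L, ∑ s ∈ range (t b), m b s < ∑ b ∈ L, ∑ s ∈ range (t' b), m b s) ↔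
    ∃ κ ∈ L, ∃ ρ ∈ L, κ ≠ ρ ∧ 1 ≤ t ρ ∧ m ρ (t ρ - 1) < m κ (t κ) := by
  constructor
  · rintro ⟨t', hsum, hgt⟩
    by_contra! hex
    exact hgt.not_ge (sum_prefixSum_le_of_forall_exchange L m hm hex hsum)
  · rintro ⟨κ, hκ, ρ, hρ, hκρ, hρt, hlt⟩
    exact exists_sum_prefixSum_gt_of_exchange L m hκ hρ hκρ hρt hlt

end Allocation

theorem stmt12 {ι : Type*} (p : ℝ) (hp0 : 0 < p) (hp1 : p < 1)
    (L : Finset ι) (r : ι → ℕ) (tmax : ℕ)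
    (t : ι → ℕ) (hfeas : (∑ b ∈ L, t b) = tmax) :
    (¬ ∀ t' : ι → ℕ, (∑ b ∈ L, t' b) = tmax →
      ∑ b ∈ L, expRank p (r b) (t' b) ≤ ∑ b ∈ L, expRank p (r b) (t b)) ↔
    ∃ κ ∈ L, ∃ ρ ∈ L, κ ≠ ρ ∧ 1 ≤ t ρ ∧
      (1 - p) * betaP p (t ρ - 1) (r ρ) < (1 - p) * betaP p (t κ) (r κ) := by
  subst hfeas
  have hm : ∀ b ∈ L, Antitone fun s => (1 - p) * betaP p s (r b) := fun b _ =>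
    (betaP_antitone hp0.le hp1.le (r b)).const_mul (sub_nonneg.2 hp1.le)
  simp_rw [expRank_eq_sum_betaP]
  push Not
  exact exists_sum_prefixSum_gt_iff L _ hm t
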